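/- arXiv:1810.04073 — 4 statements merged into one kernel-verified Lean document; each statement's English description precedes it below -/
import Mathlib

section
/- Assume F : Y → ℝ ∪ {+∞} and G : Q → ℝ ∪ {+∞} are proper, convex and lower semicontinuous; that there exists u₀ ∈ Y with F(u₀) < ∞ such that G is finite and continuous at Λu₀; and that F(v) + G(Λv) → +∞ as ‖v‖ → ∞. Then there exists a minimizer u ∈ Y of the primal functional Jᵖ(v) = F(v) + G(Λv) over Y, there exists a maximizer σ ∈ Q* of the dual functional Jᵈ(τ) = −F*(Λ*τ) − G*(−τ) over Q*, the strong duality Jᵖ(u) = Jᵈ(σ) holds, and the extremal relations F(u) + F*(Λ*σ) − ⟨Λ*σ, u⟩ = 0 and G(Λu) + G*(−σ) + ⟨σ, Λu⟩ = 0 hold. -/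
open Filter Topology

open Set Bornology NormedSpace

/-!
The primal functional `J = F + G ∘ Λ` is convex, lower semicontinuous and coercive, so its
sublevel sets are bounded and weakly closed, hence weakly compact by reflexivity
(Banach–Alaoglu in the bidual); thus `J` attains its minimum `m` at some `u`.

For the dual problem consider the perturbed epigraph
`C = {(q, t) | ∃ v, F v + G (Λ v + q) ≤ t} ⊆ Q × ℝ`. It is convex, contains no `(0, t)` with
`t < m`, and has `(0, s)` in its interior for large `s` because `G` is bounded above near `Λ u₀`.
A supporting hyperplane of `C` at `(0, m)` is therefore non-vertical, i.e. the graph of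
`q ↦ m - σ q` for some `σ ∈ Q*`. The resulting inequality `m - σ (w - Λ v) ≤ F v + G w` says
exactly that the suprema defining `F* (Λ* σ)` and `G* (-σ)` are attained at `u` and `Λ u`, which
gives strong duality and the extremal relations; weak duality makes `σ` a dual maximizer.
-/

section WeakTopology

variable {E : Type*} [AddCommGroup E] [Module ℝ E] [TopologicalSpace E] [IsTopologicalAddGroup E]
  [ContinuousSMul ℝ E] [LocallyConvexSpace ℝ E]

theorem Convex.isClosed_toWeakSpace_image {s : Set E} (hs : Convex ℝ s) (hc : IsClosed s) :
    IsClosed (toWeakSpace ℝ E '' s) := by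
  rw [← closure_eq_iff_isClosed, ← hs.toWeakSpace_closure ℝ, hc.closure_eq]

theorem LowerSemicontinuous.comp_toWeakSpace_symm {β : Type*} [LinearOrder β] {J : E → β}
    (hJ : LowerSemicontinuous J) (hq : QuasiconvexOn ℝ univ J) :
    LowerSemicontinuous (J ∘ (toWeakSpace ℝ E).symm) := by
  refine lowerSemicontinuous_iff_isClosed_preimage.2 fun y => ?_
  rw [preimage_comp, ← LinearEquiv.image_eq_preimage_symm]
  exact Convex.isClosed_toWeakSpace_image (s := {x | J x ≤ y})
    (by simpa only [mem_univ, true_and] using hq y) (hJ.isClosed_preimage y)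

end WeakTopology

section Reflexive

variable {Y : Type*} [NormedAddCommGroup Y] [NormedSpace ℝ Y]

theorem Convex.isCompact_toWeakSpace_image
    (hY : Function.Surjective (inclusionInDoubleDual ℝ Y)) {s : Set Y}
    (hs : Convex ℝ s) (hc : IsClosed s) (hb : IsBounded s) :
    IsCompact (toWeakSpace ℝ Y '' s) := by
  have hrange : range (inclusionInDoubleDualWeak ℝ Y) = univ := by
    refine eq_univ_of_forall fun z => ?_
    obtain ⟨y, hy⟩ := hY (WeakDual.toStrongDual z)
    exact ⟨toWeakSpace ℝ Y y, congrArg StrongDual.toWeakDual hy⟩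
  have := isCompact_closure_of_isBounded ℝ Y (toWeakSpace ℝ Y '' s)
    (by rwa [preimage_image_eq _ (toWeakSpace ℝ Y).injective]) (hrange ▸ subset_univ _)
  rwa [(hs.isClosed_toWeakSpace_image hc).closure_eq] at this

theorem exists_forall_le_of_reflexive (hY : Function.Surjective (inclusionInDoubleDual ℝ Y))
    {β : Type*} [LinearOrder β] {J : Y → β} (hJ : LowerSemicontinuous J)
    (hq : QuasiconvexOn ℝ univ J) (hcoer : Tendsto J (cobounded Y) atTop) {v₀ : Y} {b : β}
    (hb : J v₀ < b) : ∃ u, ∀ v, J u ≤ J v := by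
  set K := {v | J v ≤ J v₀}
  have hK : IsBounded K := by
    refine (isCobounded_def.2 (hcoer.eventually_ge_atTop b)).compl.subset fun v hv hbv => ?_
    exact (hb.trans_le hbv).not_ge hv
  have hcomp := Convex.isCompact_toWeakSpace_image hY (s := K)
    (by simpa only [mem_univ, true_and] using hq (J v₀)) (hJ.isClosed_preimage _) hK
  obtain ⟨_, ⟨u, hu, rfl⟩, hmin⟩ :=
    ((hJ.comp_toWeakSpace_symm hq).lowerSemicontinuousOn _).exists_isMinOn
      ⟨_, mem_image_of_mem _ (show v₀ ∈ K from le_rfl)⟩ hcomp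
  refine ⟨u, fun v => ?_⟩
  by_cases hv : J v ≤ J v₀
  · simpa using hmin ⟨v, hv, rfl⟩
  · exact hu.trans (not_le.1 hv).le

end Reflexive

section EConvex

variable {E F : Type*} [AddCommGroup E] [Module ℝ E] [AddCommGroup F] [Module ℝ F]

/-- Convexity of an `EReal`-valued function; as `(0 : EReal) * ⊤ = 0`, the cases `t = 0, 1` are
trivial. -/
def EConvex (f : E → EReal) : Prop :=
  ∀ x y : E, ∀ t : ℝ, 0 ≤ t → t ≤ 1 →
    f (t • x + (1 - t) • y) ≤ (t : EReal) * f x + ((1 - t : ℝ) : EReal) * f y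

theorem EConvex.add {f g : E → EReal} (hf : EConvex f) (hg : EConvex g) :
    EConvex fun x => f x + g x := by
  intro x y t ht₀ ht₁
  rw [EReal.left_distrib_of_nonneg_of_ne_top (EReal.coe_nonneg.2 ht₀) (EReal.coe_ne_top _),
    EReal.left_distrib_of_nonneg_of_ne_top (EReal.coe_nonneg.2 (sub_nonneg.2 ht₁))
      (EReal.coe_ne_top _), add_add_add_comm]
  exact add_le_add (hf x y t ht₀ ht₁) (hg x y t ht₀ ht₁)

theorem EConvex.comp_linearMap {f : F → EReal} (hf : EConvex f) (L : E →ₗ[ℝ] F) :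
    EConvex (f ∘ L) := by
  intro x y t ht₀ ht₁
  simpa only [Function.comp_apply, map_add, map_smul] using hf (L x) (L y) t ht₀ ht₁

theorem EConvex.apply_combo_le {f : E → EReal} (hf : EConvex f) {x y : E} {a b : EReal}
    (hx : f x ≤ a) (hy : f y ≤ b) {t : ℝ} (ht₀ : 0 ≤ t) (ht₁ : t ≤ 1) :
    f (t • x + (1 - t) • y) ≤ (t : EReal) * a + ((1 - t : ℝ) : EReal) * b :=
  (hf x y t ht₀ ht₁).trans <| add_le_add (mul_le_mul_of_nonneg_left hx (EReal.coe_nonneg.2 ht₀))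
    (mul_le_mul_of_nonneg_left hy (EReal.coe_nonneg.2 (sub_nonneg.2 ht₁)))

theorem EConvex.quasiconvexOn {f : E → EReal} (hf : EConvex f) : QuasiconvexOn ℝ univ f := by
  rintro r x ⟨-, hx⟩ y ⟨-, hy⟩ a b ha hb hab
  obtain rfl : b = 1 - a := eq_sub_of_add_eq' hab
  refine ⟨mem_univ _, (hf.apply_combo_le hx hy ha (by linarith)).trans_eq ?_⟩
  rw [← EReal.right_distrib_of_nonneg (EReal.coe_nonneg.2 ha) (EReal.coe_nonneg.2 hb),
    ← EReal.coe_add, add_sub_cancel, EReal.coe_one, one_mul]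

theorem EConvex.convex_epigraph {f : E → EReal} (hf : EConvex f) :
    Convex ℝ {p : E × ℝ | f p.1 ≤ p.2} := by
  rintro ⟨x, s⟩ hx ⟨y, r⟩ hy a b ha hb hab
  obtain rfl : b = 1 - a := eq_sub_of_add_eq' hab
  simpa using hf.apply_combo_le hx hy ha (by linarith)

theorem EConvex.convex_setOf_exists_le {Φ : E × F → EReal} (hΦ : EConvex Φ) :
    Convex ℝ {p : F × ℝ | ∃ x, Φ (x, p.1) ≤ p.2} := by
  rintro ⟨q₁, t₁⟩ ⟨x₁, h₁⟩ ⟨q₂, t₂⟩ ⟨x₂, h₂⟩ a b ha hb hab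
  exact ⟨a • x₁ + b • x₂, by
    simpa using hΦ.convex_epigraph (x := ((x₁, q₁), t₁)) h₁ (y := ((x₂, q₂), t₂)) h₂ ha hb hab⟩

end EConvex

theorem exists_forall_add_comp_le {Y Q : Type*} [NormedAddCommGroup Y] [NormedSpace ℝ Y]
    [NormedAddCommGroup Q] [NormedSpace ℝ Q]
    (hY : Function.Surjective (inclusionInDoubleDual ℝ Y)) (Λ : Y →L[ℝ] Q) {F : Y → EReal}
    {G : Q → EReal} (hFbot : ∀ y, F y ≠ ⊥) (hGbot : ∀ q, G q ≠ ⊥) (hFconv : EConvex F)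
    (hGconv : EConvex G) (hFlsc : LowerSemicontinuous F) (hGlsc : LowerSemicontinuous G)
    (hcoer : Tendsto (fun v => F v + G (Λ v)) (cobounded Y) atTop) {u₀ : Y}
    (hu₀ : F u₀ + G (Λ u₀) < ⊤) : ∃ u, ∀ v, F u + G (Λ u) ≤ F v + G (Λ v) :=
  exists_forall_le_of_reflexive hY
    (hFlsc.add' (hGlsc.comp Λ.continuous) fun _ =>
      EReal.continuousAt_add (.inr (hGbot _)) (.inl (hFbot _)))
    (hFconv.add (hGconv.comp_linearMap Λ.toLinearMap)).quasiconvexOn hcoer hu₀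

theorem mem_interior_setOf_exists_le {E F : Type*} [TopologicalSpace F] [Zero F]
    {Φ : E × F → EReal} {x₀ : E} {M s : ℝ} (hM : ∀ᶠ q in 𝓝 0, Φ (x₀, q) ≤ M) (hs : M < s) :
    ((0 : F), s) ∈ interior {p : F × ℝ | ∃ x, Φ (x, p.1) ≤ p.2} := by
  rw [mem_interior_iff_mem_nhds, nhds_prod_eq]
  filter_upwards [prod_mem_prod hM (Ioi_mem_nhds hs)] with p hp
  exact ⟨x₀, hp.1.trans (EReal.coe_le_coe_iff.2 (le_of_lt hp.2))⟩

theorem Convex.exists_nonvertical_supporting_hyperplane {Q : Type*} [NormedAddCommGroup Q]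
    [NormedSpace ℝ Q] {C : Set (Q × ℝ)} (hC : Convex ℝ C) {m s : ℝ} (hms : m < s)
    (hs : ((0 : Q), s) ∈ interior C) (hm : ∀ t < m, ((0 : Q), t) ∉ C) :
    ∃ σ : StrongDual ℝ Q, ∀ p ∈ C, m - σ p.1 ≤ p.2 := by
  have hm' : ((0 : Q), m) ∉ interior C := fun h => by
    have hev : ∀ᶠ t in 𝓝[<] m, ((0 : Q), t) ∈ C := nhdsWithin_le_nhds <|
      (Continuous.prodMk_right (0 : Q)).continuousAt.eventually (mem_interior_iff_mem_nhds.1 h)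
    obtain ⟨t, htC, htm⟩ := (hev.and self_mem_nhdsWithin).exists
    exact hm t htm htC
  obtain ⟨φ, hφ⟩ := geometric_hahn_banach_open_point hC.interior isOpen_interior hm'
  have hφC : ∀ p ∈ C, φ p ≤ φ (0, m) := by
    have : closure (interior C) ⊆ {p | φ p ≤ φ (0, m)} :=
      closure_minimal (fun p hp => (hφ p hp).le) (isClosed_le φ.continuous continuous_const)
    rw [hC.closure_interior_eq_closure_of_nonempty_interior ⟨_, hs⟩] at this
    exact fun p hp => this (subset_closure hp)
  set a := φ (0, 1)
  have hφ_apply (q : Q) (t : ℝ) : φ (q, t) = φ (q, 0) + t * a := by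
    rw [← smul_eq_mul, ← map_smul, ← map_add, Prod.smul_mk, smul_zero, smul_eq_mul, mul_one,
      Prod.mk_add_mk, add_zero, zero_add]
  -- `(0, s)` lies above `(0, m)` and strictly inside `C`, so the hyperplane is not vertical.
  have ha : a < 0 := by
    have := hφ _ hs
    rw [hφ_apply, hφ_apply 0 m] at this
    nlinarith
  refine ⟨a⁻¹ • φ.comp (ContinuousLinearMap.inl ℝ Q ℝ), fun ⟨q, t⟩ hp => ?_⟩
  have := hφC _ hp
  rw [hφ_apply, hφ_apply 0 m, Prod.mk_zero_zero, map_zero, zero_add] at this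
  change m - a⁻¹ * φ (q, 0) ≤ t
  linear_combination mul_le_mul_of_nonpos_left this (inv_nonpos.2 ha.le) +
    (t - m) * mul_inv_cancel₀ ha.ne

theorem ContinuousAt.eventually_add_le {Q : Type*} [TopologicalSpace Q] [AddZeroClass Q]
    [ContinuousAdd Q] {G : Q → EReal} {y₀ : Q} (hG : ContinuousAt G y₀) {b c : ℝ}
    (hb : G y₀ = b) (hbc : b < c) : ∀ᶠ q in 𝓝 0, G (y₀ + q) ≤ c := by
  have hG' : ContinuousAt (fun q => G (y₀ + q)) 0 :=
    hG.comp_of_eq (continuous_const_add _).continuousAt (add_zero _)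
  refine (hG'.eventually_lt continuousAt_const ?_).mono fun _ => le_of_lt
  rw [add_zero, hb]
  exact_mod_cast hbc

theorem EConvex.exists_dual_affine_minorant {E Q : Type*} [AddCommGroup E] [Module ℝ E]
    [NormedAddCommGroup Q] [NormedSpace ℝ Q] {Φ : E × Q → EReal} (hΦ : EConvex Φ) {x₀ : E}
    {M : ℝ} (hM : ∀ᶠ q in 𝓝 0, Φ (x₀, q) ≤ M) {m : ℝ} (hm : ∀ x, (m : EReal) ≤ Φ (x, 0)) :
    ∃ σ : StrongDual ℝ Q, ∀ x q (t : ℝ), Φ (x, q) ≤ t → m - σ q ≤ t := by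
  obtain ⟨σ, hσ⟩ := hΦ.convex_setOf_exists_le.exists_nonvertical_supporting_hyperplane
    ((le_max_right M m).trans_lt (lt_add_one _))
    (mem_interior_setOf_exists_le hM ((le_max_left M m).trans_lt (lt_add_one _)))
    fun t ht ⟨x, hx⟩ => (EReal.coe_le_coe_iff.1 ((hm x).trans hx)).not_gt ht
  exact ⟨σ, fun x q t h => hσ (q, t) ⟨x, h⟩⟩

theorem exists_dual_minorant_add_comp {Y Q : Type*} [AddCommGroup Y] [Module ℝ Y]
    [TopologicalSpace Y] [NormedAddCommGroup Q] [NormedSpace ℝ Q] (Λ : Y →L[ℝ] Q)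
    {F : Y → EReal} {G : Q → EReal} (hFconv : EConvex F) (hGconv : EConvex G) {u₀ : Y}
    {a b : ℝ} (ha : F u₀ = a) (hb : G (Λ u₀) = b) (hGcont : ContinuousAt G (Λ u₀)) {m : ℝ}
    (hm : ∀ v, (m : EReal) ≤ F v + G (Λ v)) :
    ∃ σ : StrongDual ℝ Q, ∀ v q (t : ℝ), F v + G (Λ v + q) ≤ t → m - σ q ≤ t := by
  have hΦ : EConvex fun p : Y × Q => F p.1 + G (Λ p.1 + p.2) :=
    (hFconv.comp_linearMap (LinearMap.fst ℝ Y Q)).add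
      (hGconv.comp_linearMap (Λ.toLinearMap.coprod LinearMap.id))
  have hbdd : ∀ᶠ q in 𝓝 0, F u₀ + G (Λ u₀ + q) ≤ ((a + (b + 1) : ℝ) : EReal) :=
    (hGcont.eventually_add_le hb (lt_add_one b)).mono fun q hq => by
      rw [ha, EReal.coe_add]
      exact add_le_add le_rfl hq
  exact hΦ.exists_dual_affine_minorant hbdd fun v => by simpa only [add_zero] using hm v

section Conjugate

variable {E F : Type*} [AddCommGroup E] [Module ℝ E] [TopologicalSpace E]
  [AddCommGroup F] [Module ℝ F] [TopologicalSpace F]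

noncomputable def fenchelConj (f : E → EReal) (p : StrongDual ℝ E) : EReal :=
  ⨆ x ∈ {x | f x < ⊤}, ((p x : EReal) - f x)

theorem coe_sub_le_fenchelConj {f : E → EReal} (p : StrongDual ℝ E) {x : E} {c : ℝ}
    (hx : f x = c) : ((p x - c : ℝ) : EReal) ≤ fenchelConj f p :=
  le_iSup₂_of_le (f := fun x (_ : x ∈ {x | f x < ⊤}) => ((p x : EReal) - f x)) x
    (by simp [hx]) (by rw [hx, EReal.coe_sub])

theorem fenchelConj_eq_of_forall_le {f : E → EReal} (hf : ∀ x, f x ≠ ⊥) {p : StrongDual ℝ E}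
    {x₀ : E} {c : ℝ} (hx₀ : f x₀ = c) (h : ∀ x (r : ℝ), f x = r → p x - r ≤ p x₀ - c) :
    fenchelConj f p = ((p x₀ - c : ℝ) : EReal) := by
  refine le_antisymm (iSup₂_le fun x hx => ?_) (coe_sub_le_fenchelConj p hx₀)
  lift f x to ℝ using ⟨hx.ne, hf x⟩ with r hr
  exact_mod_cast h x r hr.symm

theorem neg_fenchelConj_sub_fenchelConj_le (Λ : E →L[ℝ] F) {f : E → EReal} {g : F → EReal}
    (τ : StrongDual ℝ F) {x : E} {a b : ℝ} (ha : f x = a) (hb : g (Λ x) = b) :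
    -fenchelConj f (τ.comp Λ) - fenchelConj g (-τ) ≤ ((a + b : ℝ) : EReal) := by
  have hf := coe_sub_le_fenchelConj (τ.comp Λ) ha
  have hg := coe_sub_le_fenchelConj (-τ) hb
  calc -fenchelConj f (τ.comp Λ) - fenchelConj g (-τ)
      ≤ -((τ (Λ x) - a : ℝ) : EReal) - ((-τ (Λ x) - b : ℝ) : EReal) :=
        EReal.sub_le_sub (EReal.neg_le_neg_iff.2 hf) hg
    _ = ((a + b : ℝ) : EReal) := by norm_cast; ring

theorem fenchelConj_comp_eq_of_dual_minorant {Λ : E →L[ℝ] F} {f : E → EReal} {g : F → EReal}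
    (hf : ∀ x, f x ≠ ⊥) {σ : StrongDual ℝ F} {u : E} {a b : ℝ} (ha : f u = a) (hb : g (Λ u) = b)
    (hσ : ∀ x q (t : ℝ), f x + g (Λ x + q) ≤ t → a + b - σ q ≤ t) :
    fenchelConj f (σ.comp Λ) = ((σ (Λ u) - a : ℝ) : EReal) :=
  fenchelConj_eq_of_forall_le hf ha fun x r hr => by
    have := hσ x (Λ u - Λ x) (r + b) (by simp [hr, hb])
    simp only [map_sub] at this
    simp only [ContinuousLinearMap.comp_apply]
    linarith

theorem fenchelConj_neg_eq_of_dual_minorant {Λ : E →L[ℝ] F} {f : E → EReal} {g : F → EReal}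
    (hg : ∀ y, g y ≠ ⊥) {σ : StrongDual ℝ F} {u : E} {a b : ℝ} (ha : f u = a) (hb : g (Λ u) = b)
    (hσ : ∀ x q (t : ℝ), f x + g (Λ x + q) ≤ t → a + b - σ q ≤ t) :
    fenchelConj g (-σ) = ((-σ (Λ u) - b : ℝ) : EReal) :=
  fenchelConj_eq_of_forall_le hg hb fun y r hr => by
    have := hσ u (y - Λ u) (a + r) (by simp [hr, ha])
    simp only [map_sub] at this
    simp only [neg_apply]
    linarith

end Conjugate

theorem fenchel_duality_exists_general
    {Y Q : Type*} [NormedAddCommGroup Y] [NormedSpace ℝ Y]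
    [NormedAddCommGroup Q] [NormedSpace ℝ Q]
    (hYrefl : Function.Surjective (NormedSpace.inclusionInDoubleDual ℝ Y))
    (Lam : Y →L[ℝ] Q)
    (F : Y → EReal) (G : Q → EReal)
    -- `F` and `G` are proper (never `⊥`, not identically `⊤`)
    (hFbot : ∀ y, F y ≠ ⊥)
    (hGbot : ∀ q, G q ≠ ⊥)
    -- `F` and `G` are convex
    (hFconv : ∀ x y : Y, ∀ t : ℝ, 0 ≤ t → t ≤ 1 →
      F (t • x + (1 - t) • y) ≤ (t : EReal) * F x + ((1 - t : ℝ) : EReal) * F y)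
    (hGconv : ∀ p q : Q, ∀ t : ℝ, 0 ≤ t → t ≤ 1 →
      G (t • p + (1 - t) • q) ≤ (t : EReal) * G p + ((1 - t : ℝ) : EReal) * G q)
    -- `F` and `G` are lower semicontinuous
    (hFlsc : LowerSemicontinuous F) (hGlsc : LowerSemicontinuous G)
    -- there is `u₀` with `F` finite at `u₀` and `G` finite and continuous at `Λ u₀`
    (u₀ : Y) (hFu₀ : F u₀ < ⊤) (hGu₀ : G (Lam u₀) < ⊤)
    (hGcont : ContinuousAt G (Lam u₀))
    -- coercivity: `F(v) + G(Λ v) → +∞` as `‖v‖ → ∞`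
    (hcoer : Tendsto (fun v : Y => F v + G (Lam v)) (Bornology.cobounded Y) atTop) :
    -- conjugate functionals, primal and dual functionals
    let Fstar : StrongDual ℝ Y → EReal := fun p =>
      ⨆ x ∈ {x : Y | F x < ⊤}, ((p x : EReal) - F x)
    let Gstar : StrongDual ℝ Q → EReal := fun p =>
      ⨆ q ∈ {q : Q | G q < ⊤}, ((p q : EReal) - G q)
    let Jp : Y → EReal := fun v => F v + G (Lam v)
    let Jd : StrongDual ℝ Q → EReal := fun τ =>
      -Fstar (ContinuousLinearMap.comp τ Lam) - Gstar (-τ)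
    ∃ (u : Y) (σ : StrongDual ℝ Q),
      (∀ v : Y, Jp u ≤ Jp v) ∧
      (∀ τ : StrongDual ℝ Q, Jd τ ≤ Jd σ) ∧
      Jp u = Jd σ ∧
      F u + Fstar (ContinuousLinearMap.comp σ Lam) - ((σ (Lam u) : ℝ) : EReal) = 0 ∧
      G (Lam u) + Gstar (-σ) + ((σ (Lam u) : ℝ) : EReal) = 0 := by
  intro Fstar Gstar Jp Jd
  lift F u₀ to ℝ using ⟨hFu₀.ne, hFbot u₀⟩ with f₀ hf₀
  lift G (Lam u₀) to ℝ using ⟨hGu₀.ne, hGbot _⟩ with g₀ hg₀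
  have hJu₀ : Jp u₀ < ⊤ := by simp only [Jp, ← hf₀, ← hg₀, ← EReal.coe_add, EReal.coe_lt_top]
  obtain ⟨u, hmin⟩ : ∃ u, ∀ v, Jp u ≤ Jp v :=
    exists_forall_add_comp_le hYrefl Lam hFbot hGbot hFconv hGconv hFlsc hGlsc hcoer hJu₀
  obtain ⟨hFu, hGu⟩ := (EReal.add_ne_top_iff_ne_top₂ (hFbot u) (hGbot _)).1
    ((hmin u₀).trans_lt hJu₀).ne
  lift F u to ℝ using ⟨hFu, hFbot u⟩ with fu hfu
  lift G (Lam u) to ℝ using ⟨hGu, hGbot _⟩ with gu hgu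
  have hJu : Jp u = ((fu + gu : ℝ) : EReal) := by simp only [Jp, ← hfu, ← hgu, EReal.coe_add]
  obtain ⟨σ, hσ⟩ := exists_dual_minorant_add_comp Lam hFconv hGconv hf₀.symm hg₀.symm hGcont
    (m := fu + gu) fun v => hJu ▸ hmin v
  have hFσ : Fstar (σ.comp Lam) = ((σ (Lam u) - fu : ℝ) : EReal) :=
    fenchelConj_comp_eq_of_dual_minorant hFbot hfu.symm hgu.symm hσ
  have hGσ : Gstar (-σ) = ((-σ (Lam u) - gu : ℝ) : EReal) :=
    fenchelConj_neg_eq_of_dual_minorant hGbot hfu.symm hgu.symm hσ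
  have hJdσ : Jd σ = ((fu + gu : ℝ) : EReal) := by
    simp only [Jd, hFσ, hGσ]
    norm_cast
    ring
  refine ⟨u, σ, hmin, fun τ => hJdσ ▸ neg_fenchelConj_sub_fenchelConj_le Lam τ hfu.symm hgu.symm,
    hJu.trans hJdσ.symm, ?_, ?_⟩ <;>
  · simp only [← hfu, ← hgu, hFσ, hGσ]
    norm_cast
    ring

/-- Statement 2 (Fenchel duality / existence of primal and dual optimizers with
strong duality and extremal relations), for proper convex lsc `F`, `G` on
reflexive Banach spaces with a coercive primal functional. -/
theorem fenchel_duality_exists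
    {Y Q : Type*} [NormedAddCommGroup Y] [NormedSpace ℝ Y] [CompleteSpace Y]
    [NormedAddCommGroup Q] [NormedSpace ℝ Q] [CompleteSpace Q]
    (hYrefl : Function.Surjective (NormedSpace.inclusionInDoubleDual ℝ Y))
    (hQrefl : Function.Surjective (NormedSpace.inclusionInDoubleDual ℝ Q))
    (Lam : Y →L[ℝ] Q)
    (F : Y → EReal) (G : Q → EReal)
    -- `F` and `G` are proper (never `⊥`, not identically `⊤`)
    (hFbot : ∀ y, F y ≠ ⊥) (hFdom : ∃ y, F y < ⊤)
    (hGbot : ∀ q, G q ≠ ⊥) (hGdom : ∃ q, G q < ⊤)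
    -- `F` and `G` are convex
    (hFconv : ∀ x y : Y, ∀ t : ℝ, 0 ≤ t → t ≤ 1 →
      F (t • x + (1 - t) • y) ≤ (t : EReal) * F x + ((1 - t : ℝ) : EReal) * F y)
    (hGconv : ∀ p q : Q, ∀ t : ℝ, 0 ≤ t → t ≤ 1 →
      G (t • p + (1 - t) • q) ≤ (t : EReal) * G p + ((1 - t : ℝ) : EReal) * G q)
    -- `F` and `G` are lower semicontinuous
    (hFlsc : LowerSemicontinuous F) (hGlsc : LowerSemicontinuous G)
    -- there is `u₀` with `F` finite at `u₀` and `G` finite and continuous at `Λ u₀`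
    (u₀ : Y) (hFu₀ : F u₀ < ⊤) (hGu₀ : G (Lam u₀) < ⊤)
    (hGcont : ContinuousAt G (Lam u₀))
    -- coercivity: `F(v) + G(Λ v) → +∞` as `‖v‖ → ∞`
    (hcoer : Tendsto (fun v : Y => F v + G (Lam v)) (Bornology.cobounded Y) atTop) :
    -- conjugate functionals, primal and dual functionals
    let Fstar : StrongDual ℝ Y → EReal := fun p =>
      ⨆ x ∈ {x : Y | F x < ⊤}, ((p x : EReal) - F x)
    let Gstar : StrongDual ℝ Q → EReal := fun p =>
      ⨆ q ∈ {q : Q | G q < ⊤}, ((p q : EReal) - G q)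
    let Jp : Y → EReal := fun v => F v + G (Lam v)
    let Jd : StrongDual ℝ Q → EReal := fun τ =>
      -Fstar (ContinuousLinearMap.comp τ Lam) - Gstar (-τ)
    ∃ (u : Y) (σ : StrongDual ℝ Q),
      (∀ v : Y, Jp u ≤ Jp v) ∧
      (∀ τ : StrongDual ℝ Q, Jd τ ≤ Jd σ) ∧
      Jp u = Jd σ ∧
      F u + Fstar (ContinuousLinearMap.comp σ Lam) - ((σ (Lam u) : ℝ) : EReal) = 0 ∧
      G (Lam u) + Gstar (-σ) + ((σ (Lam u) : ℝ) : EReal) = 0 :=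
  fenchel_duality_exists_general hYrefl Lam F G hFbot hGbot hFconv hGconv hFlsc hGlsc u₀ hFu₀ hGu₀
    hGcont hcoer
end

section
/- Let u ∈ K be a weak primal solution, σ ∈ M a weak dual solution, and assume there exists σ̄ ∈ M with R σ̄ = −Λ̃ u (in the elliptic application σ̄ = −𝒜Λu ∈ Σ_fg). Then the generalized Prager–Synge identity holds: for every v ∈ K and every τ ∈ M, ‖Λ̃(u−v)‖² + ‖R(σ−τ)‖² = 2(Jᵖ(v) − Jᵈ(τ)) = ‖Λ̃ v + R τ‖², i.e. the combined energy error |||(u−v, σ−τ)|||_c² equals twice the primal-dual gap. -/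
/-!
The integration-by-parts identity makes `Λ̃ (K - K)` and `R (M - M)` orthogonal, and it forces
the weak dual solution to be the exact flux: `R σ = R σ̄ = -Λ̃ u`, since `σ - σ̄` is a dual test
direction against which both `R σ` and `R σ̄` act as `ψ`. Hence
`Λ̃ (u - v) + R (σ - τ) = -(Λ̃ v + R τ)` is an orthogonal decomposition, and Pythagoras gives the
first identity; expanding `‖Λ̃ v + R τ‖²` with integration by parts gives twice the primal-dual gap.
-/

open RealInnerProductSpace

section PragerSynge

variable {V S H : Type*} [AddCommGroup V] [Module ℝ V] [AddCommGroup S] [Module ℝ S]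
  [NormedAddCommGroup H] [InnerProductSpace ℝ H]
  {L : V →ₗ[ℝ] H} {R : S →ₗ[ℝ] H} {φ : V →ₗ[ℝ] ℝ} {ψ : S →ₗ[ℝ] ℝ} {K : Set V} {M : Set S}

theorem inner_map_map_sub_of_compat (hcompat : ∀ v ∈ K, ∀ τ ∈ M, ⟪L v, R τ⟫ = -φ v - ψ τ)
    {v : V} (hv : v ∈ K) {τ₁ τ₂ : S} (hτ₁ : τ₁ ∈ M) (hτ₂ : τ₂ ∈ M) :
    ⟪L v, R (τ₁ - τ₂)⟫ = -ψ (τ₁ - τ₂) := by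
  rw [map_sub, inner_sub_right, hcompat v hv τ₁ hτ₁, hcompat v hv τ₂ hτ₂, map_sub]
  ring

theorem inner_map_sub_map_sub_eq_zero_of_compat
    (hcompat : ∀ v ∈ K, ∀ τ ∈ M, ⟪L v, R τ⟫ = -φ v - ψ τ)
    {v₁ v₂ : V} (hv₁ : v₁ ∈ K) (hv₂ : v₂ ∈ K) {τ₁ τ₂ : S} (hτ₁ : τ₁ ∈ M) (hτ₂ : τ₂ ∈ M) :
    ⟪L (v₁ - v₂), R (τ₁ - τ₂)⟫ = 0 := by
  rw [map_sub L, inner_sub_left, inner_map_map_sub_of_compat hcompat hv₁ hτ₁ hτ₂,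
    inner_map_map_sub_of_compat hcompat hv₂ hτ₁ hτ₂, sub_self]

theorem map_eq_neg_of_weak_dual (hcompat : ∀ v ∈ K, ∀ τ ∈ M, ⟪L v, R τ⟫ = -φ v - ψ τ)
    {u : V} (hu : u ∈ K) {σ σbar : S} (hσ : σ ∈ M) (hσbar : σbar ∈ M)
    (hexact : R σbar = -L u) (hweak : ⟪R σ, R (σ - σbar)⟫ = ψ (σ - σbar)) :
    R σ = -L u := by
  have hzero : ⟪R (σ - σbar), R (σ - σbar)⟫ = 0 := by
    rw [map_sub R σ σbar, inner_sub_left, ← map_sub, hweak, hexact, inner_neg_left,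
      inner_map_map_sub_of_compat hcompat hu hσ hσbar]
    ring
  rw [← hexact, ← sub_eq_zero, ← map_sub]
  exact inner_self_eq_zero.mp hzero

theorem norm_add_sq_eq_of_compat (hcompat : ∀ v ∈ K, ∀ τ ∈ M, ⟪L v, R τ⟫ = -φ v - ψ τ)
    {v : V} (hv : v ∈ K) {τ : S} (hτ : τ ∈ M) :
    ‖L v + R τ‖ ^ 2 = ‖L v‖ ^ 2 + ‖R τ‖ ^ 2 - 2 * (φ v + ψ τ) := by
  rw [norm_add_sq_real, hcompat v hv τ hτ]
  ring

theorem norm_sq_add_norm_sq_eq_norm_add_sq_of_compat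
    (hcompat : ∀ v ∈ K, ∀ τ ∈ M, ⟪L v, R τ⟫ = -φ v - ψ τ)
    {u v : V} (hu : u ∈ K) (hv : v ∈ K) {σ τ : S} (hσ : σ ∈ M) (hτ : τ ∈ M)
    (hflux : R σ = -L u) :
    ‖L (u - v)‖ ^ 2 + ‖R (σ - τ)‖ ^ 2 = ‖L v + R τ‖ ^ 2 := by
  have hsum : L (u - v) + R (σ - τ) = -(L v + R τ) := by
    rw [map_sub, map_sub, hflux]
    abel
  rw [sq, sq, ← norm_add_sq_eq_norm_sq_add_norm_sq_real
      (inner_map_sub_map_sub_eq_zero_of_compat hcompat hu hv hσ hτ), hsum, norm_neg, sq]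

end PragerSynge

theorem generalized_prager_synge_general {V S H : Type*} [AddCommGroup V] [Module ℝ V]
    [AddCommGroup S] [Module ℝ S]
    [NormedAddCommGroup H] [InnerProductSpace ℝ H]
    (L : V →ₗ[ℝ] H) (R : S →ₗ[ℝ] H)
    (a : V → V → ℝ) (ha : ∀ v w : V, a v w = (inner ℝ (L v) (L w) : ℝ))
    (b : S → S → ℝ) (hb : ∀ ρ τ : S, b ρ τ = (inner ℝ (R ρ) (R τ) : ℝ))
    (φ : V →ₗ[ℝ] ℝ) (ψ : S →ₗ[ℝ] ℝ)
    (S₀₀ : Submodule ℝ S) (σ_fg : S)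
    (K : Set V)
    (M : Set S) (hM : M = {τ : S | τ - σ_fg ∈ S₀₀})
    (Jp : V → ℝ) (hJp : ∀ v, Jp v = (1 / 2) * a v v - φ v)
    (Jd : S → ℝ) (hJd : ∀ τ, Jd τ = -(1 / 2) * b τ τ + ψ τ)
    (hcompat : ∀ v ∈ K, ∀ τ ∈ M, (inner ℝ (L v) (R τ) : ℝ) = -φ v - ψ τ)
    (u : V) (hu : u ∈ K)
    (σ : S) (hσ : σ ∈ M) (hσweak : ∀ τ ∈ S₀₀, b σ τ = ψ τ)
    (hexact : ∃ σbar ∈ M, R σbar = -(L u)) :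
    ∀ v ∈ K, ∀ τ ∈ M,
      ‖L (u - v)‖ ^ 2 + ‖R (σ - τ)‖ ^ 2 = 2 * (Jp v - Jd τ) ∧
      2 * (Jp v - Jd τ) = ‖L v + R τ‖ ^ 2 := by
  obtain ⟨σbar, hσbar, hσbarR⟩ := hexact
  have hdir : σ - σbar ∈ S₀₀ := by
    subst hM
    simpa using S₀₀.sub_mem hσ hσbar
  have hflux : R σ = -L u :=
    map_eq_neg_of_weak_dual hcompat hu hσ hσbar hσbarR (by rw [← hb]; exact hσweak _ hdir)
  intro v hv τ hτ
  have hgap : 2 * (Jp v - Jd τ) = ‖L v + R τ‖ ^ 2 := by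
    rw [hJp, hJd, ha, hb, real_inner_self_eq_norm_sq, real_inner_self_eq_norm_sq,
      norm_add_sq_eq_of_compat hcompat hv hτ]
    ring
  exact ⟨(norm_sq_add_norm_sq_eq_norm_add_sq_of_compat hcompat hu hv hσ hτ hflux).trans hgap.symm,
    hgap⟩

/-- generalized Prager–Synge identity. If `u ∈ K` is a weak primal
solution, `σ ∈ M` is a weak dual solution, and some `σ̄ ∈ M` satisfies
`R σ̄ = −Λ̃ u`, then for all `v ∈ K`, `τ ∈ M`:
`‖Λ̃(u−v)‖² + ‖R(σ−τ)‖² = 2(Jᵖ(v) − Jᵈ(τ)) = ‖Λ̃ v + R τ‖²`. -/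
theorem generalized_prager_synge {V S H : Type*} [AddCommGroup V] [Module ℝ V]
    [AddCommGroup S] [Module ℝ S]
    [NormedAddCommGroup H] [InnerProductSpace ℝ H]
    (L : V →ₗ[ℝ] H) (R : S →ₗ[ℝ] H)
    (a : V → V → ℝ) (ha : ∀ v w : V, a v w = (inner ℝ (L v) (L w) : ℝ))
    (b : S → S → ℝ) (hb : ∀ ρ τ : S, b ρ τ = (inner ℝ (R ρ) (R τ) : ℝ))
    (φ : V →ₗ[ℝ] ℝ) (ψ : S →ₗ[ℝ] ℝ)
    (V₀ : Submodule ℝ V) (S₀₀ : Submodule ℝ S) (u_g : V) (σ_fg : S)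
    (K : Set V) (hK : K = {v : V | v - u_g ∈ V₀})
    (M : Set S) (hM : M = {τ : S | τ - σ_fg ∈ S₀₀})
    (Jp : V → ℝ) (hJp : ∀ v, Jp v = (1 / 2) * a v v - φ v)
    (Jd : S → ℝ) (hJd : ∀ τ, Jd τ = -(1 / 2) * b τ τ + ψ τ)
    (hcompat : ∀ v ∈ K, ∀ τ ∈ M, (inner ℝ (L v) (R τ) : ℝ) = -φ v - ψ τ)
    (u : V) (hu : u ∈ K) (huweak : ∀ w ∈ V₀, a u w = φ w)
    (σ : S) (hσ : σ ∈ M) (hσweak : ∀ τ ∈ S₀₀, b σ τ = ψ τ)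
    (hexact : ∃ σbar ∈ M, R σbar = -(L u)) :
    ∀ v ∈ K, ∀ τ ∈ M,
      ‖L (u - v)‖ ^ 2 + ‖R (σ - τ)‖ ^ 2 = 2 * (Jp v - Jd τ) ∧
      2 * (Jp v - Jd τ) = ‖L v + R τ‖ ^ 2 :=
  generalized_prager_synge_general L R a ha b hb φ ψ S₀₀ σ_fg K M hM Jp hJp Jd hJd hcompat u hu σ hσ
    hσweak hexact
end

section
/- Define the Lagrangian L(v,τ) = Jᵖ(v) − (1/2)‖Λ̃ v + R τ‖² for v ∈ K and τ ∈ M. Let u ∈ K be a weak primal solution, σ ∈ M a weak dual solution, and assume there exists σ̄ ∈ M with R σ̄ = −Λ̃ u. Then (u,σ) is a saddle point of L on K × M, i.e. L(u,τ) ≤ L(u,σ) ≤ L(v,σ) for all v ∈ K and τ ∈ M, and moreover inf_{v∈K} Jᵖ(v) = Jᵖ(u) = L(u,σ) = Jᵈ(σ) = sup_{τ∈M} Jᵈ(τ). -/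
/-!
For `v ∈ K` and `τ ∈ M` the compatibility condition turns the duality gap into a square,
`Jᵖ(v) − Jᵈ(τ) = ½‖Λ̃ v + R τ‖²`; in particular the Lagrangian equals `Jᵈ(τ)` on `K × M`.
The weak dual equation gives `Jᵈ(σ) − Jᵈ(τ) = ½‖R(σ − τ)‖²`, so `σ` maximises `Jᵈ` on `M`,
and the exactness witness `σ̄` closes the gap: `Jᵖ(u) = Jᵈ(σ̄) ≤ Jᵈ(σ) ≤ Jᵖ(u)`. By weak duality `Jᵈ(σ) ≤ Jᵖ(v)`,
so `u` minimises `Jᵖ` on `K`.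
-/

open RealInnerProductSpace

theorem duality_gap_eq_half_sq_norm_add {H : Type*} [NormedAddCommGroup H]
    [InnerProductSpace ℝ H] {x y : H} {p q : ℝ} (h : ⟪x, y⟫ = -p - q) :
    (1 / 2 * ‖x‖ ^ 2 - p) - (-(1 / 2) * ‖y‖ ^ 2 + q) = 1 / 2 * ‖x + y‖ ^ 2 := by
  rw [norm_add_sq_real, h]
  ring

theorem quadratic_sub_eq_half_sq_norm_of_inner_eq {S H : Type*} [AddCommGroup S] [Module ℝ S]
    [NormedAddCommGroup H] [InnerProductSpace ℝ H] (R : S →ₗ[ℝ] H) (ψ : S →ₗ[ℝ] ℝ) {σ τ : S}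
    (h : ⟪R σ, R (σ - τ)⟫ = ψ (σ - τ)) :
    (-(1 / 2) * ‖R σ‖ ^ 2 + ψ σ) - (-(1 / 2) * ‖R τ‖ ^ 2 + ψ τ) = 1 / 2 * ‖R (σ - τ)‖ ^ 2 := by
  rw [map_sub, map_sub, inner_sub_right, real_inner_self_eq_norm_sq] at h
  rw [map_sub, norm_sub_sq_real]
  linarith

theorem isLeast_isGreatest_of_weak_duality {α β : Type*} {K : Set α} {M : Set β}
    {Jp : α → ℝ} {Jd : β → ℝ} (hweak : ∀ v ∈ K, ∀ τ ∈ M, Jd τ ≤ Jp v)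
    {u : α} {σ : β} (hu : u ∈ K) (hσ : σ ∈ M) (heq : Jp u = Jd σ) :
    IsLeast (Jp '' K) (Jp u) ∧ IsGreatest (Jd '' M) (Jd σ) := by
  refine ⟨⟨⟨u, hu, rfl⟩, ?_⟩, ⟨⟨σ, hσ, rfl⟩, ?_⟩⟩
  · rintro _ ⟨v, hv, rfl⟩
    exact heq ▸ hweak v hv σ hσ
  · rintro _ ⟨τ, hτ, rfl⟩
    exact heq ▸ hweak u hu τ hτ

theorem lagrangian_saddle_point_general {V S H : Type*}
    [AddCommGroup V] [Module ℝ V] [AddCommGroup S] [Module ℝ S]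
    [NormedAddCommGroup H] [InnerProductSpace ℝ H]
    (L : V →ₗ[ℝ] H) (R : S →ₗ[ℝ] H)
    (a : V → V → ℝ) (ha : ∀ v w : V, a v w = (inner ℝ (L v) (L w) : ℝ))
    (b : S → S → ℝ) (hb : ∀ ρ τ : S, b ρ τ = (inner ℝ (R ρ) (R τ) : ℝ))
    (φ : V →ₗ[ℝ] ℝ) (ψ : S →ₗ[ℝ] ℝ)
    (S₀₀ : Submodule ℝ S) (σ_fg : S)
    (K : Set V)
    (M : Set S) (hM : M = {τ : S | τ - σ_fg ∈ S₀₀})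
    (Jp : V → ℝ) (hJp : ∀ v, Jp v = (1 / 2) * a v v - φ v)
    (Jd : S → ℝ) (hJd : ∀ τ, Jd τ = -(1 / 2) * b τ τ + ψ τ)
    (hcompat : ∀ v ∈ K, ∀ τ ∈ M, (inner ℝ (L v) (R τ) : ℝ) = -φ v - ψ τ)
    (Lag : V → S → ℝ) (hLag : ∀ v τ, Lag v τ = Jp v - (1 / 2) * ‖L v + R τ‖ ^ 2)
    (u : V) (hu : u ∈ K)
    (σ : S) (hσ : σ ∈ M) (hσweak : ∀ τ ∈ S₀₀, b σ τ = ψ τ)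
    (hexact : ∃ σbar ∈ M, R σbar = -(L u)) :
    ((∀ τ ∈ M, Lag u τ ≤ Lag u σ) ∧ (∀ v ∈ K, Lag u σ ≤ Lag v σ)) ∧
    IsLeast (Jp '' K) (Jp u) ∧
    Jp u = Lag u σ ∧
    Lag u σ = Jd σ ∧
    IsGreatest (Jd '' M) (Jd σ) := by
  have hJp' : ∀ v, Jp v = 1 / 2 * ‖L v‖ ^ 2 - φ v := fun v => by
    rw [hJp, ha, real_inner_self_eq_norm_sq]
  have hJd' : ∀ τ, Jd τ = -(1 / 2) * ‖R τ‖ ^ 2 + ψ τ := fun τ => by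
    rw [hJd, hb, real_inner_self_eq_norm_sq]
  have gap : ∀ v ∈ K, ∀ τ ∈ M, Jp v - Jd τ = 1 / 2 * ‖L v + R τ‖ ^ 2 := fun v hv τ hτ => by
    rw [hJp', hJd']
    exact duality_gap_eq_half_sq_norm_add (hcompat v hv τ hτ)
  have weak_duality : ∀ v ∈ K, ∀ τ ∈ M, Jd τ ≤ Jp v := fun v hv τ hτ => by
    linarith [gap v hv τ hτ, sq_nonneg ‖L v + R τ‖]
  have lag_eq : ∀ v ∈ K, ∀ τ ∈ M, Lag v τ = Jd τ := fun v hv τ hτ => by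
    rw [hLag]
    linarith [gap v hv τ hτ]
  have dual_max : ∀ τ ∈ M, Jd τ ≤ Jd σ := fun τ hτ => by
    have hdiff : σ - τ ∈ S₀₀ := by
      subst hM
      simpa using S₀₀.sub_mem hσ hτ
    have h := quadratic_sub_eq_half_sq_norm_of_inner_eq R ψ ((hb _ _).symm.trans (hσweak _ hdiff))
    rw [hJd', hJd']
    linarith [sq_nonneg ‖R (σ - τ)‖]
  obtain ⟨σbar, hσbar, hRσbar⟩ := hexact
  have heq : Jp u = Jd σ := by
    have hclosed : Jp u = Jd σbar := by
      have h := gap u hu σbar hσbar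
      rw [hRσbar, add_neg_cancel, norm_zero] at h
      linarith
    linarith [dual_max σbar hσbar, weak_duality u hu σ hσ]
  obtain ⟨hmin, hmax⟩ := isLeast_isGreatest_of_weak_duality weak_duality hu hσ heq
  refine ⟨⟨fun τ hτ => ?_, fun v hv => ?_⟩, hmin, heq.trans (lag_eq u hu σ hσ).symm,
    lag_eq u hu σ hσ, hmax⟩
  · rw [lag_eq u hu τ hτ, lag_eq u hu σ hσ]
    exact dual_max τ hτ
  · rw [lag_eq u hu σ hσ, lag_eq v hv σ hσ]

/-- with the Lagrangian `L(v,τ) = Jᵖ(v) − (1/2)‖Λ̃ v + R τ‖²`,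
the pair `(u,σ)` of weak primal and dual solutions is a saddle point of the
Lagrangian on `K × M`, and
`inf_{v∈K} Jᵖ(v) = Jᵖ(u) = L(u,σ) = Jᵈ(σ) = sup_{τ∈M} Jᵈ(τ)`. -/
theorem lagrangian_saddle_point {V S H : Type*}
    [AddCommGroup V] [Module ℝ V] [AddCommGroup S] [Module ℝ S]
    [NormedAddCommGroup H] [InnerProductSpace ℝ H]
    (L : V →ₗ[ℝ] H) (R : S →ₗ[ℝ] H)
    (a : V → V → ℝ) (ha : ∀ v w : V, a v w = (inner ℝ (L v) (L w) : ℝ))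
    (b : S → S → ℝ) (hb : ∀ ρ τ : S, b ρ τ = (inner ℝ (R ρ) (R τ) : ℝ))
    (φ : V →ₗ[ℝ] ℝ) (ψ : S →ₗ[ℝ] ℝ)
    (V₀ : Submodule ℝ V) (S₀₀ : Submodule ℝ S) (u_g : V) (σ_fg : S)
    (K : Set V) (hK : K = {v : V | v - u_g ∈ V₀})
    (M : Set S) (hM : M = {τ : S | τ - σ_fg ∈ S₀₀})
    (Jp : V → ℝ) (hJp : ∀ v, Jp v = (1 / 2) * a v v - φ v)
    (Jd : S → ℝ) (hJd : ∀ τ, Jd τ = -(1 / 2) * b τ τ + ψ τ)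
    (hcompat : ∀ v ∈ K, ∀ τ ∈ M, (inner ℝ (L v) (R τ) : ℝ) = -φ v - ψ τ)
    (Lag : V → S → ℝ) (hLag : ∀ v τ, Lag v τ = Jp v - (1 / 2) * ‖L v + R τ‖ ^ 2)
    (u : V) (hu : u ∈ K) (huweak : ∀ w ∈ V₀, a u w = φ w)
    (σ : S) (hσ : σ ∈ M) (hσweak : ∀ τ ∈ S₀₀, b σ τ = ψ τ)
    (hexact : ∃ σbar ∈ M, R σbar = -(L u)) :
    ((∀ τ ∈ M, Lag u τ ≤ Lag u σ) ∧ (∀ v ∈ K, Lag u σ ≤ Lag v σ)) ∧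
    IsLeast (Jp '' K) (Jp u) ∧
    Jp u = Lag u σ ∧
    Lag u σ = Jd σ ∧
    IsGreatest (Jd '' M) (Jd σ) :=
  lagrangian_saddle_point_general L R a ha b hb φ ψ S₀₀ σ_fg K M hM Jp hJp Jd hJd hcompat Lag hLag u
    hu σ hσ hσweak hexact
end

section
/- Let V₀ₕ ⊆ V₀ and Σ₀₀ₕ ⊆ Σ₀₀ be linear subspaces, let u ∈ K be a weak primal solution and σ ∈ M a weak dual solution, and let uₕ = u_g + u₀ₕ with u₀ₕ ∈ V₀ₕ satisfying a(uₕ, v) = φ(v) for all v ∈ V₀ₕ, and σₕ = σ_fg + σ₀₀ₕ with σ₀₀ₕ ∈ Σ₀₀ₕ satisfying b(σₕ, τ) = ψ(τ) for all τ ∈ Σ₀₀ₕ (the primal and dual Galerkin solutions). Then the combined best approximation identity with constant one holds: |||(u − uₕ, σ − σₕ)|||_c = inf over (v,τ) ∈ V₀ₕ × Σ₀₀ₕ of |||(u − u_g − v, σ − σ_fg − τ)|||_c. -/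
/-!
The Galerkin error `u - uₕ` is orthogonal to `V₀ₕ` in the energy inner product, since both `u`
and `uₕ` satisfy the same equations there; Pythagoras then makes `uₕ` the best approximation
of `u` in the affine space `u_g + V₀ₕ`, and likewise `σₕ` for `σ` in `σ_fg + Σ₀₀ₕ`. The two
minimisations are independent, so the combined seminorm is minimised at `(uₕ, σₕ)`.
-/

open RealInnerProductSpace

section Galerkin

variable {V H : Type*} [AddCommGroup V] [Module ℝ V] [NormedAddCommGroup H]
  [InnerProductSpace ℝ H] (L : V →ₗ[ℝ] H)

theorem inner_map_sub_eq_zero_of_forall_inner_eq {W : Set V} {φ : V → ℝ} {u u' w : V}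
    (hu : ∀ w ∈ W, ⟪L u, L w⟫ = φ w) (hu' : ∀ w ∈ W, ⟪L u', L w⟫ = φ w) (hw : w ∈ W) :
    ⟪L (u - u'), L w⟫ = 0 := by
  rw [map_sub, inner_sub_left, hu w hw, hu' w hw, sub_self]

theorem galerkin_sq_norm_map_error_le {W : Submodule ℝ V} {φ : V → ℝ} {u g u₀ v : V}
    (hu : ∀ w ∈ W, ⟪L u, L w⟫ = φ w) (hgal : ∀ w ∈ W, ⟪L (g + u₀), L w⟫ = φ w)
    (hu₀ : u₀ ∈ W) (hv : v ∈ W) :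
    ‖L (u - (g + u₀))‖ ^ 2 ≤ ‖L (u - g - v)‖ ^ 2 := by
  have horth : ⟪L (u - (g + u₀)), L (u₀ - v)⟫ = 0 :=
    inner_map_sub_eq_zero_of_forall_inner_eq L hu hgal (W.sub_mem hu₀ hv)
  have hsplit : u - g - v = (u - (g + u₀)) + (u₀ - v) := by abel
  rw [hsplit, map_add, norm_add_sq_real, horth, mul_zero, add_zero]
  exact le_add_of_nonneg_right (sq_nonneg _)

end Galerkin

theorem combined_best_approximation_general {V S H : Type*}
    [AddCommGroup V] [Module ℝ V] [AddCommGroup S] [Module ℝ S]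
    [NormedAddCommGroup H] [InnerProductSpace ℝ H]
    (L : V →ₗ[ℝ] H) (R : S →ₗ[ℝ] H)
    (a : V → V → ℝ) (ha : ∀ v w : V, a v w = (inner ℝ (L v) (L w) : ℝ))
    (b : S → S → ℝ) (hb : ∀ ρ τ : S, b ρ τ = (inner ℝ (R ρ) (R τ) : ℝ))
    (φ : V →ₗ[ℝ] ℝ) (ψ : S →ₗ[ℝ] ℝ)
    (V₀ : Submodule ℝ V) (S₀₀ : Submodule ℝ S) (u_g : V) (σ_fg : S)
    (V₀h : Submodule ℝ V) (hVh : V₀h ≤ V₀)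
    (S₀₀h : Submodule ℝ S) (hSh : S₀₀h ≤ S₀₀)
    (u : V) (huweak : ∀ w ∈ V₀, a u w = φ w)
    (σ : S) (hσweak : ∀ τ ∈ S₀₀, b σ τ = ψ τ)
    (u₀h : V) (hu₀h : u₀h ∈ V₀h)
    (hugal : ∀ v ∈ V₀h, a (u_g + u₀h) v = φ v)
    (σ₀₀h : S) (hσ₀₀h : σ₀₀h ∈ S₀₀h)
    (hσgal : ∀ τ ∈ S₀₀h, b (σ_fg + σ₀₀h) τ = ψ τ) :
    IsLeast
      {x : ℝ | ∃ v ∈ V₀h, ∃ τ ∈ S₀₀h,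
        x = Real.sqrt (‖L (u - u_g - v)‖ ^ 2 + ‖R (σ - σ_fg - τ)‖ ^ 2)}
      (Real.sqrt (‖L (u - (u_g + u₀h))‖ ^ 2 + ‖R (σ - (σ_fg + σ₀₀h))‖ ^ 2)) := by
  simp only [ha] at huweak hugal
  simp only [hb] at hσweak hσgal
  refine ⟨⟨u₀h, hu₀h, σ₀₀h, hσ₀₀h, by rw [sub_add_eq_sub_sub, sub_add_eq_sub_sub]⟩, ?_⟩
  rintro x ⟨v, hv, τ, hτ, rfl⟩
  refine Real.sqrt_le_sqrt (add_le_add ?_ ?_)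
  · exact galerkin_sq_norm_map_error_le L (fun w hw => huweak w (hVh hw)) hugal hu₀h hv
  · exact galerkin_sq_norm_map_error_le R (fun τ hτ => hσweak τ (hSh hτ)) hσgal hσ₀₀h hτ

/-- combined best approximation identity with constant one for
the primal and dual Galerkin solutions in the combined energy seminorm
`|||(v,τ)|||_c = (‖Λ̃ v‖² + ‖R τ‖²)^{1/2}`:
`|||(u − uₕ, σ − σₕ)|||_c = inf_{(v,τ) ∈ V₀ₕ × Σ₀₀ₕ} |||(u − u_g − v, σ − σ_fg − τ)|||_c`. -/
theorem combined_best_approximation {V S H : Type*}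
    [AddCommGroup V] [Module ℝ V] [AddCommGroup S] [Module ℝ S]
    [NormedAddCommGroup H] [InnerProductSpace ℝ H]
    (L : V →ₗ[ℝ] H) (R : S →ₗ[ℝ] H)
    (a : V → V → ℝ) (ha : ∀ v w : V, a v w = (inner ℝ (L v) (L w) : ℝ))
    (b : S → S → ℝ) (hb : ∀ ρ τ : S, b ρ τ = (inner ℝ (R ρ) (R τ) : ℝ))
    (φ : V →ₗ[ℝ] ℝ) (ψ : S →ₗ[ℝ] ℝ)
    (V₀ : Submodule ℝ V) (S₀₀ : Submodule ℝ S) (u_g : V) (σ_fg : S)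
    (K : Set V) (hK : K = {v : V | v - u_g ∈ V₀})
    (M : Set S) (hM : M = {τ : S | τ - σ_fg ∈ S₀₀})
    (V₀h : Submodule ℝ V) (hVh : V₀h ≤ V₀)
    (S₀₀h : Submodule ℝ S) (hSh : S₀₀h ≤ S₀₀)
    (u : V) (hu : u ∈ K) (huweak : ∀ w ∈ V₀, a u w = φ w)
    (σ : S) (hσ : σ ∈ M) (hσweak : ∀ τ ∈ S₀₀, b σ τ = ψ τ)
    (u₀h : V) (hu₀h : u₀h ∈ V₀h)
    (hugal : ∀ v ∈ V₀h, a (u_g + u₀h) v = φ v)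
    (σ₀₀h : S) (hσ₀₀h : σ₀₀h ∈ S₀₀h)
    (hσgal : ∀ τ ∈ S₀₀h, b (σ_fg + σ₀₀h) τ = ψ τ) :
    IsLeast
      {x : ℝ | ∃ v ∈ V₀h, ∃ τ ∈ S₀₀h,
        x = Real.sqrt (‖L (u - u_g - v)‖ ^ 2 + ‖R (σ - σ_fg - τ)‖ ^ 2)}
      (Real.sqrt (‖L (u - (u_g + u₀h))‖ ^ 2 + ‖R (σ - (σ_fg + σ₀₀h))‖ ^ 2)) :=
  combined_best_approximation_general L R a ha b hb φ ψ V₀ S₀₀ u_g σ_fg V₀h hVh S₀₀h hSh u huweak σ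
    hσweak u₀h hu₀h hugal σ₀₀h hσ₀₀h hσgal
end
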